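/- For k = 2, each of the five Wronskians of the ordered family [x^{3k-2}, 1, x^k, (1+x^{2k-2})(x + k x^{2k-1}), (1+x^{2k-2})(x + k x^{2k-1}) arctan(x^{k-1})], i.e. of [x^4, 1, x^2, (1+x^2)(x+2x^3), (1+x^2)(x+2x^3) arctan x], is nonvanishing on (0, ∞); in particular W4(x) = 1536 x^3 (2x^2 + 9)/(x^2+1)^3 > 0 for x > 0. -/

import Mathlib

open Real

/-- The family `[x^4, 1, x^2, (1+x^2)(x+2x^3), (1+x^2)(x+2x^3) arctan x]`. -/
noncomputable def fam18 : Fin 5 → ℝ → ℝ :=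
  ![fun x => x ^ 4,
    fun _ => 1,
    fun x => x ^ 2,
    fun x => (1 + x ^ 2) * (x + 2 * x ^ 3),
    fun x => (1 + x ^ 2) * (x + 2 * x ^ 3) * arctan x]

/-- The Wronskian of the first `i+1` functions of the family at `x`. -/
noncomputable def wronskian18 (i : Fin 5) (x : ℝ) : ℝ :=
  Matrix.det (fun j l : Fin (i.val + 1) => deriv^[j.val] (fam18 (Fin.castLE i.isLt l)) x)

/-! The polynomial columns are differentiated directly. For `q = (1 + x²)(x + 2x³)` the
`k`-th derivative of `q · arctan` is `q⁽ᵏ⁾ · arctan + (rational function)`, because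
`q / (1 + x²) = x + 2x³` is again a polynomial; this gives the whole table of derivatives in
closed form, and each Wronskian is then a cofactor expansion. The only non-obvious sign is
`W₃ = 48x(10x⁴ - 3x² + 1)`, whose quartic factor has negative discriminant in `x²`. -/

theorem iterate_deriv_eq_of_hasDerivAt {𝕜 F : Type*} [NontriviallyNormedField 𝕜]
    [NormedAddCommGroup F] [NormedSpace 𝕜 F] {n : ℕ} {f : Fin (n + 1) → 𝕜 → F}
    (hf : ∀ (k : Fin n) (x : 𝕜), HasDerivAt (f k.castSucc) (f k.succ x) x) (k : Fin (n + 1)) :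
    deriv^[k] (f 0) = f k := by
  induction k using Fin.induction with
  | zero => rfl
  | succ k ih =>
    rw [Fin.val_succ, Function.iterate_succ_apply', ← Fin.val_castSucc, ih]
    exact funext fun x => (hf k x).deriv

noncomputable def fam18Deriv : Fin 5 → Fin 5 → ℝ → ℝ :=
  ![![fun x => x ^ 4, fun x => 4 * x ^ 3, fun x => 12 * x ^ 2, fun x => 24 * x, fun _ => 24],
    ![fun _ => 1, fun _ => 0, fun _ => 0, fun _ => 0, fun _ => 0],
    ![fun x => x ^ 2, fun x => 2 * x, fun _ => 2, fun _ => 0, fun _ => 0],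
    ![fun x => (1 + x ^ 2) * (x + 2 * x ^ 3), fun x => 1 + 9 * x ^ 2 + 10 * x ^ 4,
      fun x => 18 * x + 40 * x ^ 3, fun x => 18 + 120 * x ^ 2, fun x => 240 * x],
    ![fun x => (1 + x ^ 2) * (x + 2 * x ^ 3) * arctan x,
      fun x => (1 + 9 * x ^ 2 + 10 * x ^ 4) * arctan x + (x + 2 * x ^ 3),
      fun x => (18 * x + 40 * x ^ 3) * arctan x + (16 * x ^ 2 + 2 / (1 + x ^ 2)),
      fun x => (18 + 120 * x ^ 2) * arctan x + (72 * x - 22 * x / (1 + x ^ 2)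
        - 4 * x / (1 + x ^ 2) ^ 2),
      fun x => 240 * x * arctan x + (192 - 124 / (1 + x ^ 2) + (44 * x ^ 2 - 4) / (1 + x ^ 2) ^ 2
        + 16 * x ^ 2 / (1 + x ^ 2) ^ 3)]]

lemma hasDerivAt_one_add_sq {𝕜 : Type*} [NontriviallyNormedField 𝕜] (x : 𝕜) :
    HasDerivAt (fun y => 1 + y ^ 2) (2 * x) x := by
  simpa using (hasDerivAt_pow 2 x).const_add 1

lemma hasDerivAt_fam18Deriv_three (k : Fin 4) (x : ℝ) :
    HasDerivAt (fam18Deriv 3 k.castSucc) (fam18Deriv 3 k.succ x) x := by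
  fin_cases k <;>
    simp only [fam18Deriv, Fin.reduceFinMk, Fin.reduceCastSucc, Fin.reduceSucc, Matrix.cons_val,
      Fin.isValue]
  · exact ((hasDerivAt_one_add_sq x).fun_mul
      ((hasDerivAt_id' x).fun_add ((hasDerivAt_pow 3 x).const_mul 2))).congr_deriv (by ring)
  · exact ((((hasDerivAt_pow 2 x).const_mul 9).const_add 1).fun_add
      ((hasDerivAt_pow 4 x).const_mul 10)).congr_deriv (by ring)
  · exact (((hasDerivAt_id' x).const_mul 18).fun_add
      ((hasDerivAt_pow 3 x).const_mul 40)).congr_deriv (by ring)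
  · exact (((hasDerivAt_pow 2 x).const_mul 120).const_add 18).congr_deriv (by ring)

lemma hasDerivAt_fam18Deriv_four (k : Fin 4) (x : ℝ) :
    HasDerivAt (fam18Deriv 4 k.castSucc) (fam18Deriv 4 k.succ x) x := by
  have hq := (hasDerivAt_fam18Deriv_three k x).fun_mul (hasDerivAt_arctan x)
  have h0 : 1 + x ^ 2 ≠ 0 := by positivity
  fin_cases k <;>
    simp only [fam18Deriv, Fin.reduceFinMk, Fin.reduceCastSucc, Fin.reduceSucc, Matrix.cons_val,
      Fin.isValue] at hq ⊢
  · exact hq.congr_deriv (by field_simp)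
  · exact (hq.fun_add ((hasDerivAt_id' x).fun_add ((hasDerivAt_pow 3 x).const_mul 2))).congr_deriv
      (by field_simp; ring)
  · exact (hq.fun_add (((hasDerivAt_pow 2 x).const_mul 16).fun_add
      ((hasDerivAt_const x 2).fun_div (hasDerivAt_one_add_sq x) h0))).congr_deriv
      (by field_simp; ring)
  · exact (hq.fun_add ((((hasDerivAt_id' x).const_mul 72).fun_sub
      (((hasDerivAt_id' x).const_mul 22).fun_div (hasDerivAt_one_add_sq x) h0)).fun_sub
      (((hasDerivAt_id' x).const_mul 4).fun_div ((hasDerivAt_one_add_sq x).fun_pow 2)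
        (pow_ne_zero 2 h0)))).congr_deriv (by field_simp; ring)

lemma iterate_deriv_fam18 (l j : Fin 5) : deriv^[j] (fam18 l) = fam18Deriv l j := by
  fin_cases l <;> simp only [Fin.reduceFinMk, Fin.isValue]
  · ext x
    rw [← iteratedDeriv_eq_iterate, show fam18 0 = (· ^ 4) from rfl, iteratedDeriv_pow]
    fin_cases j <;> simp [fam18Deriv]
  · ext x
    rw [← iteratedDeriv_eq_iterate, show fam18 1 = fun _ => 1 from rfl, iteratedDeriv_const]
    fin_cases j <;> rfl
  · ext x
    rw [← iteratedDeriv_eq_iterate, show fam18 2 = (· ^ 2) from rfl, iteratedDeriv_pow]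
    fin_cases j <;> simp [fam18Deriv]
  · exact iterate_deriv_eq_of_hasDerivAt hasDerivAt_fam18Deriv_three j
  · exact iterate_deriv_eq_of_hasDerivAt hasDerivAt_fam18Deriv_four j

lemma wronskian18_eq_det (n : ℕ) (hn : n < 5) (x : ℝ) :
    wronskian18 ⟨n, hn⟩ x =
      (Matrix.of fun j l : Fin (n + 1) =>
        fam18Deriv (Fin.castLE hn l) (Fin.castLE hn j) x).det := by
  unfold wronskian18
  congr 1
  ext j l
  exact congrFun (iterate_deriv_fam18 _ (Fin.castLE hn j)) x

lemma wronskian18_zero (x : ℝ) : wronskian18 0 x = x ^ 4 := by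
  refine (wronskian18_eq_det 0 (by norm_num) x).trans ?_
  simp [fam18Deriv]

lemma wronskian18_one (x : ℝ) : wronskian18 1 x = -(4 * x ^ 3) := by
  refine (wronskian18_eq_det 1 (by norm_num) x).trans ?_
  simp [Matrix.det_fin_two, fam18Deriv]

lemma wronskian18_two (x : ℝ) : wronskian18 2 x = 16 * x ^ 3 := by
  refine (wronskian18_eq_det 2 (by norm_num) x).trans ?_
  simp [Matrix.det_succ_row_zero, Fin.sum_univ_succ, Fin.succAbove, fam18Deriv]
  ring

lemma wronskian18_three (x : ℝ) : wronskian18 3 x = 48 * x * (10 * x ^ 4 - 3 * x ^ 2 + 1) := by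
  refine (wronskian18_eq_det 3 (by norm_num) x).trans ?_
  simp [Matrix.det_succ_row_zero, Fin.sum_univ_succ, Fin.succAbove, fam18Deriv]
  ring

lemma wronskian18_four (x : ℝ) :
    wronskian18 4 x = 1536 * x ^ 3 * (2 * x ^ 2 + 9) / (x ^ 2 + 1) ^ 3 := by
  refine (wronskian18_eq_det 4 (by norm_num) x).trans ?_
  simp [Matrix.det_succ_row_zero, Fin.sum_univ_succ, Fin.succAbove, fam18Deriv]
  field_simp
  ring

theorem stmt_18 :
    (∀ i : Fin 5, ∀ x : ℝ, 0 < x → wronskian18 i x ≠ 0) ∧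
    ∀ x : ℝ, 0 < x →
      wronskian18 4 x = 1536 * x ^ 3 * (2 * x ^ 2 + 9) / (x ^ 2 + 1) ^ 3 ∧
      0 < wronskian18 4 x := by
  refine ⟨fun i x hx => ?_, fun x hx => ⟨wronskian18_four x, ?_⟩⟩
  · fin_cases i <;> simp only [Fin.reduceFinMk, Fin.isValue]
    · rw [wronskian18_zero]; positivity
    · rw [wronskian18_one]; exact neg_ne_zero.mpr (by positivity)
    · rw [wronskian18_two]; positivity
    · rw [wronskian18_three]
      have : 0 < 10 * x ^ 4 - 3 * x ^ 2 + 1 := by nlinarith [sq_nonneg (x ^ 2 - 3 / 20)]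
      positivity
    · rw [wronskian18_four]; positivity
  · rw [wronskian18_four]; positivity
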